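/- arXiv:2003.00592 — 2 statements merged into one kernel-verified Lean document; each statement's English description precedes it below -/
import Mathlib

section
/- Let C be a small category, let A ∈ Ĉ, and let G be a limit-preserving presheaf of sets on Ĉ. Then there is a bijection, natural in A and G, between the set of natural transformations Nat(Lan_{y^op} A, G) and the set G(A), where Lan_{y^op} A denotes the left Kan extension of A : C^op → Set along the opposite Yoneda embedding y^op : C^op → Ĉ^op. -/
universe u

open CategoryTheory CategoryTheory.Limits Opposite

/-- A family of morphisms `{fᵢ : cᵢ ⟶ c}` indexed by a (small) set. -/
structure CoverFamily (C : Type u) [CategoryTheory.SmallCategory C] (c : C) : Type (u + 1) where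
  ι : Type u
  obj : ι → C
  map : ∀ i : ι, obj i ⟶ c

/-- A coverage (Grothendieck pretopology) in the sense of the paper:
identity families are coverings, and coverings admit weak pullbacks. -/
structure PaperCoverage (C : Type u) [CategoryTheory.SmallCategory C] : Type (u + 1) where
  covers : ∀ c : C, Set (CoverFamily C c)
  id_mem : ∀ c : C, (⟨PUnit, fun _ => c, fun _ => 𝟙 c⟩ : CoverFamily C c) ∈ covers c
  pullback_compat : ∀ {c c' : C} (g : c' ⟶ c) (fam : CoverFamily C c), fam ∈ covers c →
    ∃ fam' ∈ covers c', ∀ j : fam'.ι, ∃ (i : fam.ι) (h : fam'.obj j ⟶ fam.obj i),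
      h ≫ fam.map i = fam'.map j ≫ g

variable {C : Type u} [SmallCategory C]

/-- A morphism `π : Y ⟶ X` of presheaves is a `τ`-local epimorphism if every
morphism `y(c) ⟶ X` admits local lifts through `π` along some covering family of `c`. -/
def IsLocalEpi (τ : PaperCoverage C) {Y X : Cᵒᵖ ⥤ Type u} (π : Y ⟶ X) : Prop :=
  ∀ (c : C) (φ : yoneda.obj c ⟶ X),
    ∃ fam ∈ τ.covers c, ∀ j : fam.ι,
      ∃ φj : yoneda.obj (fam.obj j) ⟶ Y, φj ≫ π = yoneda.map (fam.map j) ≫ φ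

/-- A presheaf of sets `G` on `Ĉ` is limit-preserving if it sends colimits in `Ĉ` to
limits in `Set`: for every small diagram `D`, the canonical comparison cone obtained by
applying `G` to the colimit cocone of `D` is a limit cone. -/
def LimitPreserving (G : (Cᵒᵖ ⥤ Type u)ᵒᵖ ⥤ Type u) : Prop :=
  ∀ (J : Type u) (_ : SmallCategory J) (D : J ⥤ Cᵒᵖ ⥤ Type u),
    Nonempty (Limits.IsLimit (G.mapCone (Limits.colimit.cocone D).op))

/-! Presenting `A` as the colimit of the representables `y c`, `a ∈ A(c)`, a limit-preserving `G`
identifies `G(A)` with the compatible families `(xₐ ∈ G(y c))`, which are exactly the natural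
transformations `A ⟶ yᵒᵖ ⋙ G`; the universal property of `Lan_{yᵒᵖ}` turns these into
`Lan_{yᵒᵖ} A ⟶ G`. -/

namespace LimitPreserving

variable {G : (Cᵒᵖ ⥤ Type u)ᵒᵖ ⥤ Type u}

noncomputable def isLimitMapConeOp (hG : LimitPreserving G) {J : Type u} [SmallCategory J]
    {D : J ⥤ Cᵒᵖ ⥤ Type u} {c : Cocone D} (hc : IsColimit c) : IsLimit (G.mapCone c.op) :=
  (hG J _ D).some.ofIsoLimit <| Cone.ext (G.mapIso (hc.coconePointUniqueUpToIso
    (colimit.isColimit D)).op) fun j => by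
      simp [← G.map_comp, ← op_comp]

end LimitPreserving

def natTransEquivSections (A F : Cᵒᵖ ⥤ Type u) :
    (A ⟶ F) ≃ ((CategoryOfElements.π A).leftOp.op ⋙ F).sections where
  toFun η := ⟨fun j => η.app j.unop.unop.1 j.unop.unop.2, fun g =>
    (NatTrans.naturality_apply η _ _).symm.trans (congrArg (η.app _) g.unop.unop.property)⟩
  invFun s :=
    { app c := TypeCat.ofHom fun a => s.val (op (op ⟨c, a⟩))
      naturality c c' g := by
        ext a
        exact (s.property (CategoryOfElements.homMk (A.elementsMk c a)
          (A.elementsMk c' (A.map g a)) g rfl).op.op).symm }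
  left_inv _ := rfl
  right_inv _ := rfl

section

variable {G G' : (Cᵒᵖ ⥤ Type u)ᵒᵖ ⥤ Type u}

noncomputable def evalEquivNatTrans (hG : LimitPreserving G) (A : Cᵒᵖ ⥤ Type u) :
    G.obj (op A) ≃ (A ⟶ yoneda.op ⋙ G) :=
  (Types.isLimitEquivSections (hG.isLimitMapConeOp
    ((Presheaf.isColimitTautologicalCocone A).whiskerEquivalence
      (CategoryOfElements.costructuredArrowYonedaEquivalence A)))).trans
    (natTransEquivSections A (yoneda.op ⋙ G)).symm

theorem evalEquivNatTrans_apply_app (hG : LimitPreserving G) {A : Cᵒᵖ ⥤ Type u}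
    (x : G.obj (op A)) (c : Cᵒᵖ) (a : A.obj c) :
    (evalEquivNatTrans hG A x).app c a = G.map (yonedaEquiv.symm a).op x :=
  rfl

theorem evalEquivNatTrans_naturality_left (hG : LimitPreserving G) {A A' : Cᵒᵖ ⥤ Type u}
    (f : A ⟶ A') (x : G.obj (op A')) :
    evalEquivNatTrans hG A (G.map f.op x) = f ≫ evalEquivNatTrans hG A' x := by
  ext c a
  change G.map (yonedaEquiv.symm a).op (G.map f.op x) = G.map (yonedaEquiv.symm (f.app c a)).op x
  rw [← Functor.map_comp_apply, ← op_comp, yonedaEquiv_symm_naturality_right]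

theorem evalEquivNatTrans_naturality_right (hG : LimitPreserving G) (hG' : LimitPreserving G')
    {A : Cᵒᵖ ⥤ Type u} (σ : G ⟶ G') (x : G.obj (op A)) :
    evalEquivNatTrans hG' A (σ.app (op A) x) =
      evalEquivNatTrans hG A x ≫ Functor.whiskerLeft yoneda.op σ := by
  ext c a
  exact (NatTrans.naturality_apply σ _ x).symm

noncomputable def lanYonedaOpHomEquiv (hG : LimitPreserving G) (A : Cᵒᵖ ⥤ Type u) :
    (yoneda.op.lan.obj A ⟶ G) ≃ G.obj (op A) :=
  ((Functor.lanAdjunction yoneda.op (Type u)).homEquiv A G).trans (evalEquivNatTrans hG A).symm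

theorem evalEquivNatTrans_lanYonedaOpHomEquiv (hG : LimitPreserving G) (A : Cᵒᵖ ⥤ Type u)
    (t : yoneda.op.lan.obj A ⟶ G) :
    evalEquivNatTrans hG A (lanYonedaOpHomEquiv hG A t) =
      (Functor.lanAdjunction yoneda.op (Type u)).homEquiv A G t :=
  Equiv.apply_symm_apply _ _

theorem lanYonedaOpHomEquiv_naturality_left (hG : LimitPreserving G) {A A' : Cᵒᵖ ⥤ Type u}
    (f : A ⟶ A') (t : yoneda.op.lan.obj A' ⟶ G) :
    lanYonedaOpHomEquiv hG A (yoneda.op.lan.map f ≫ t) =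
      G.map f.op (lanYonedaOpHomEquiv hG A' t) := by
  apply (evalEquivNatTrans hG A).injective
  rw [evalEquivNatTrans_lanYonedaOpHomEquiv, Adjunction.homEquiv_naturality_left,
    evalEquivNatTrans_naturality_left, evalEquivNatTrans_lanYonedaOpHomEquiv]

theorem lanYonedaOpHomEquiv_naturality_right (hG : LimitPreserving G) (hG' : LimitPreserving G')
    {A : Cᵒᵖ ⥤ Type u} (σ : G ⟶ G') (t : yoneda.op.lan.obj A ⟶ G) :
    lanYonedaOpHomEquiv hG' A (t ≫ σ) = σ.app (op A) (lanYonedaOpHomEquiv hG A t) := by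
  apply (evalEquivNatTrans hG' A).injective
  rw [evalEquivNatTrans_lanYonedaOpHomEquiv, Adjunction.homEquiv_naturality_right,
    evalEquivNatTrans_naturality_right hG, evalEquivNatTrans_lanYonedaOpHomEquiv]
  rfl

end

/-- For `A ∈ Ĉ` and `G` a limit-preserving presheaf of sets on `Ĉ`,
there is a bijection `Nat(Lan_{yᵒᵖ} A, G) ≃ G(A)`, natural in `A` and in `G`. -/
theorem natTrans_lan_equiv_eval :
    ∃ e : ∀ (A : Cᵒᵖ ⥤ Type u) (G : (Cᵒᵖ ⥤ Type u)ᵒᵖ ⥤ Type u), LimitPreserving G →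
        (((Functor.lan (yoneda.op : Cᵒᵖ ⥤ (Cᵒᵖ ⥤ Type u)ᵒᵖ)).obj A ⟶ G) ≃
          G.obj (Opposite.op A)),
      (∀ (A A' : Cᵒᵖ ⥤ Type u) (f : A ⟶ A') (G : (Cᵒᵖ ⥤ Type u)ᵒᵖ ⥤ Type u)
          (hG : LimitPreserving G)
          (t : (Functor.lan (yoneda.op : Cᵒᵖ ⥤ (Cᵒᵖ ⥤ Type u)ᵒᵖ)).obj A' ⟶ G),
        e A G hG ((Functor.lan (yoneda.op : Cᵒᵖ ⥤ (Cᵒᵖ ⥤ Type u)ᵒᵖ)).map f ≫ t) =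
          G.map f.op (e A' G hG t)) ∧
      (∀ (A : Cᵒᵖ ⥤ Type u) (G G' : (Cᵒᵖ ⥤ Type u)ᵒᵖ ⥤ Type u) (σ : G ⟶ G')
          (hG : LimitPreserving G) (hG' : LimitPreserving G')
          (t : (Functor.lan (yoneda.op : Cᵒᵖ ⥤ (Cᵒᵖ ⥤ Type u)ᵒᵖ)).obj A ⟶ G),
        e A G' hG' (t ≫ σ) = σ.app (Opposite.op A) (e A G hG t)) :=
  ⟨fun A _ hG => lanYonedaOpHomEquiv hG A,
    fun _ _ f _ hG t => lanYonedaOpHomEquiv_naturality_left hG f t,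
    fun _ _ _ σ hG hG' t => lanYonedaOpHomEquiv_naturality_right hG hG' σ t⟩
end

section
/- Let C be a small category. The functor from PSh(C) to PSh(Ĉ) given by F ↦ Hom_Ĉ(−, F) (the right Kan extension along the opposite Yoneda embedding) is fully faithful, and a presheaf of sets G on Ĉ lies in its essential image if and only if G is limit-preserving. Consequently, F ↦ Hom_Ĉ(−, F) and restriction along the Yoneda embedding, G ↦ (c ↦ G(y(c))), are mutually quasi-inverse equivalences between PSh(C) and the full subcategory of PSh(Ĉ) on the limit-preserving presheaves. -/
/-!
Every presheaf `Hom(−, F)` sends colimits to limits. Conversely, if `G` on `Ĉ` sends colimits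
to limits, then `Gᵒᵖ : Ĉ ⥤ Setᵒᵖ` preserves colimits and is therefore a left adjoint, `Ĉ`
being a presheaf category; if `R` is its right adjoint, then
`G(X) ≅ Hom_{Setᵒᵖ}(Gᵒᵖ X, ∗) ≅ Hom_Ĉ(X, R ∗)`, so `G` is represented by `R ∗`.
Full faithfulness is the Yoneda lemma for `Ĉ`, and restriction along `y` recovers `F`
from `Hom(−, F)` by the Yoneda lemma for `C`.
-/

universe u

open CategoryTheory CategoryTheory.Limits Opposite

variable {C : Type u} [SmallCategory C]

universe v

namespace CategoryTheory.Functor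

variable {A : Type*} [Category.{v} A]

def rightOpOpCompYonedaPUnitIso (G : Aᵒᵖ ⥤ Type v) :
    G.rightOp.op ⋙ yoneda.obj (op PUnit.{v + 1}) ≅ G :=
  NatIso.ofComponents
    (fun X => Equiv.toIso
      (((opEquiv _ _).trans TypeCat.homEquiv).trans (Equiv.funUnique PUnit _)))
    (by intro X Y f; ext g; simp [opEquiv])

lemma isRepresentable_of_isLeftAdjoint_rightOp (G : Aᵒᵖ ⥤ Type v)
    [G.rightOp.IsLeftAdjoint] : G.IsRepresentable :=
  ((Adjunction.ofIsLeftAdjoint G.rightOp).representableBy (op PUnit.{v + 1})).ofIso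
    G.rightOpOpCompYonedaPUnitIso |>.isRepresentable

end CategoryTheory.Functor

lemma limitPreserving_yoneda_obj (F : Cᵒᵖ ⥤ Type u) : LimitPreserving (yoneda.obj F) :=
  fun _ _ D => ⟨isLimitOfPreserves (yoneda.obj F) (colimit.isColimit D).op⟩

namespace LimitPreserving

variable {G : (Cᵒᵖ ⥤ Type u)ᵒᵖ ⥤ Type u}

lemma of_iso {G' : (Cᵒᵖ ⥤ Type u)ᵒᵖ ⥤ Type u} (hG : LimitPreserving G) (e : G ≅ G') :
    LimitPreserving G' :=
  fun J _ D => ⟨IsLimit.mapConeEquiv e (hG J _ D).some⟩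

lemma preservesLimitsOfSize (hG : LimitPreserving G) : PreservesLimitsOfSize.{u, u} G where
  preservesLimitsOfShape {J} _ :=
    have : PreservesLimitsOfShape Jᵒᵖᵒᵖ G :=
      ⟨fun {K} => preservesLimit_of_preserves_limit_cone
        (colimit.isColimit K.unop).op (hG Jᵒᵖ _ K.unop).some⟩
    preservesLimitsOfShape_of_equiv (opOpEquivalence J) G

lemma isRepresentable (hG : LimitPreserving G) : G.IsRepresentable :=
  have := hG.preservesLimitsOfSize
  have : PreservesColimitsOfSize.{u, u} G.rightOp := preservesColimitsOfSize_rightOp G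
  have : G.rightOp.IsLeftAdjoint := Presheaf.isLeftAdjoint_of_preservesColimits.{0} G.rightOp
  G.isRepresentable_of_isLeftAdjoint_rightOp

end LimitPreserving

lemma limitPreserving_iff_exists_yoneda_obj_iso (G : (Cᵒᵖ ⥤ Type u)ᵒᵖ ⥤ Type u) :
    LimitPreserving G ↔ ∃ F : Cᵒᵖ ⥤ Type u, Nonempty (yoneda.obj F ≅ G) where
  mp hG := have := hG.isRepresentable; ⟨G.reprX, ⟨G.reprW⟩⟩
  mpr := fun ⟨F, ⟨e⟩⟩ => (limitPreserving_yoneda_obj F).of_iso e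

abbrev yonedaToLimitPreserving :
    (Cᵒᵖ ⥤ Type u) ⥤ ObjectProperty.FullSubcategory (LimitPreserving (C := C)) :=
  ObjectProperty.lift _ yoneda limitPreserving_yoneda_obj

instance : (yonedaToLimitPreserving (C := C)).IsEquivalence where
  essSurj.mem_essImage G :=
    have := G.property.isRepresentable
    ⟨G.obj.reprX, ⟨(ObjectProperty.ι _).preimageIso G.obj.reprW⟩⟩

/-- The functor `PSh(C) ⥤ PSh(Ĉ)`, `F ↦ Hom_Ĉ(−, F)` (the right Kan
extension along the opposite Yoneda embedding, i.e. the Yoneda embedding of `Ĉ`), is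
fully faithful, and a presheaf of sets on `Ĉ` lies in its essential image if and only if
it is limit-preserving.  Consequently `F ↦ Hom_Ĉ(−, F)` and restriction along the Yoneda
embedding, `G ↦ (c ↦ G(y(c)))`, are mutually quasi-inverse equivalences between `PSh(C)`
and the full subcategory of `PSh(Ĉ)` on the limit-preserving presheaves. -/
theorem homFunctor_fullyFaithful_essImage_limitPreserving :
    (yoneda : (Cᵒᵖ ⥤ Type u) ⥤ ((Cᵒᵖ ⥤ Type u)ᵒᵖ ⥤ Type u)).Full ∧
    (yoneda : (Cᵒᵖ ⥤ Type u) ⥤ ((Cᵒᵖ ⥤ Type u)ᵒᵖ ⥤ Type u)).Faithful ∧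
    (∀ G : (Cᵒᵖ ⥤ Type u)ᵒᵖ ⥤ Type u,
      (∃ F : Cᵒᵖ ⥤ Type u, Nonempty (yoneda.obj F ≅ G)) ↔ LimitPreserving G) ∧
    ∃ e : (Cᵒᵖ ⥤ Type u) ≌
        ObjectProperty.FullSubcategory (fun G : (Cᵒᵖ ⥤ Type u)ᵒᵖ ⥤ Type u => LimitPreserving G),
      (∀ F : Cᵒᵖ ⥤ Type u, Nonempty ((e.functor.obj F).obj ≅ yoneda.obj F)) ∧
      (∀ G, Nonempty (e.inverse.obj G ≅ yoneda.op ⋙ G.obj)) := by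
  refine ⟨inferInstance, inferInstance,
    fun G => (limitPreserving_iff_exists_yoneda_obj_iso G).symm,
    yonedaToLimitPreserving.asEquivalence, fun F => ⟨Iso.refl _⟩, fun G => ⟨?_⟩⟩
  let e := (yonedaToLimitPreserving (C := C)).asEquivalence
  exact (curriedYonedaLemma'.app (e.inverse.obj G)).symm ≪≫
    Functor.isoWhiskerLeft yoneda.op ((ObjectProperty.ι _).mapIso (e.counitIso.app G))
end
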